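/- Let p be a prime, let n be a non-negative integer, let v ≥ 1, and let a₁ = 0, a₂, …, a_v ∈ ℤ_p^n. Let K' be the subgroup of ℤ_p^n generated by a₁, …, a_v. Then there exists a real polynomial R with deg(R) ≤ v − 1 such that for every integer d with 0 ≤ d ≤ n, the fraction of subgroups of ℤ_p^n of order p^d that contain K' equals R(p^d). -/

import Mathlib

/-!
Pass to subspaces of `𝔽_p^n`: let `W` be the span of the `aᵢ`, of dimension `k ≤ v - 1` because
`a₁ = 0`. Counting pairs `(U, s)` of a `d`-dimensional subspace `U` and a linearly independent
`k`-tuple `s` in `U` in two ways gives `G_d · ∏_{i<k} (q^d - q^i) = ∏_{i<k} (q^n - q^i) · N_d`, where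
`G_d` counts `d`-dimensional subspaces and `N_d` those containing `span s`; the latter depends only
on `k`, since such subspaces correspond to subspaces of the quotient by `span s`. So the fraction
is `∏_{i<k} (q^d - q^i) / (q^n - q^i)`, a polynomial of degree `k` in `q^d`.
-/

open Module Submodule

section Subspaces

variable {K V : Type*} [DivisionRing K] [AddCommGroup V] [Module K V]

lemma finrank_span_range_le_of_eq_zero {v : ℕ} (a : Fin (v + 1) → V) (ha : a 0 = 0) :
    finrank K (span K (Set.range a)) ≤ v := by
  rw [Fin.range_fin_succ, ha, span_insert_zero]
  simpa [Set.finrank] using finrank_range_le_card (R := K) (Fin.tail a)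

lemma exists_finrank_eq [Module.Finite K V] {d : ℕ} (hd : d ≤ finrank K V) :
    ∃ U : Submodule K V, finrank K U = d := by
  let b := Module.finBasis K V
  have hb : LinearIndependent K (b ∘ Fin.castLE hd) :=
    b.linearIndependent.comp _ (Fin.castLE_injective hd)
  exact ⟨span K (Set.range (b ∘ Fin.castLE hd)), by rw [finrank_span_eq_card hb, Fintype.card_fin]⟩

lemma finrank_comap_mkQ [Module.Finite K V] (W : Submodule K V) (U : Submodule K (V ⧸ W)) :
    finrank K (U.comap W.mkQ) = finrank K U + finrank K W := by
  let f : U.comap W.mkQ →ₗ[K] V ⧸ W := W.mkQ ∘ₗ (U.comap W.mkQ).subtype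
  have hrange : LinearMap.range f = U := by
    rw [LinearMap.range_comp, range_subtype, map_comap_eq_of_surjective W.mkQ_surjective]
  have hker : LinearMap.ker f = W.comap (U.comap W.mkQ).subtype := by
    rw [LinearMap.ker_comp, ker_mkQ]
  rw [← LinearMap.finrank_range_add_finrank_ker f, hrange, hker,
    LinearEquiv.finrank_eq (comapSubtypeEquivOfLe (le_comap_mkQ W U))]

lemma card_submodule_finrank_congr {V' : Type*} [AddCommGroup V'] [Module K V']
    (e : V ≃ₗ[K] V') (P : ℕ → Prop) :
    Nat.card {U : Submodule K V // P (finrank K U)} =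
      Nat.card {U : Submodule K V' // P (finrank K U)} :=
  Nat.card_congr <| (orderIsoMapComap e).toEquiv.subtypeEquiv fun U =>
    Iff.of_eq (congrArg P (e.finrank_map_eq U).symm)

lemma card_finrank_eq_and_le_eq_card_quotient [Module.Finite K V] (W : Submodule K V) (d : ℕ) :
    Nat.card {U : Submodule K V // finrank K U = d ∧ W ≤ U} =
      Nat.card {U : Submodule K (V ⧸ W) // finrank K U + finrank K W = d} := by
  refine Nat.card_congr (Equiv.symm ?_)
  refine ((comapMkQRelIso W).toEquiv.subtypeEquiv fun U => ?_).trans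
    ((Equiv.subtypeSubtypeEquivSubtypeInter _ _).trans (Equiv.subtypeEquivRight fun _ => and_comm))
  rw [← finrank_comap_mkQ]
  rfl

lemma card_finrank_eq_and_le_congr [Module.Finite K V] {W W' : Submodule K V}
    (h : finrank K W = finrank K W') (d : ℕ) :
    Nat.card {U : Submodule K V // finrank K U = d ∧ W ≤ U} =
      Nat.card {U : Submodule K V // finrank K U = d ∧ W' ≤ U} := by
  have hquot : finrank K (V ⧸ W) = finrank K (V ⧸ W') := by
    have := W.finrank_quotient_add_finrank
    have := W'.finrank_quotient_add_finrank
    omega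
  rw [card_finrank_eq_and_le_eq_card_quotient, card_finrank_eq_and_le_eq_card_quotient, h]
  exact card_submodule_finrank_congr (LinearEquiv.ofFinrankEq _ _ hquot) (· + finrank K W' = d)

end Subspaces

lemma Nat.card_sigma_of_card_eq {α : Type*} [Finite α] {β : α → Type*} [∀ a, Finite (β a)]
    {c : ℕ} (h : ∀ a, Nat.card (β a) = c) : Nat.card (Σ a, β a) = Nat.card α * c := by
  have := Fintype.ofFinite α
  rw [Nat.card_sigma, Finset.sum_congr rfl fun a _ => h a, Finset.sum_const, Finset.card_univ,
    smul_eq_mul, Nat.card_eq_fintype_card]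

lemma Nat.cast_prod_pow_sub_pow {q m k : ℕ} (hq : 0 < q) (hk : k ≤ m) :
    ((∏ i : Fin k, (q ^ m - q ^ i.val) : ℕ) : ℝ) = ∏ i ∈ Finset.range k, ((q : ℝ) ^ m - q ^ i) := by
  rw [Nat.cast_prod, Fin.prod_univ_eq_prod_range (fun i => ((q ^ m - q ^ i : ℕ) : ℝ))]
  refine Finset.prod_congr rfl fun i hi => ?_
  rw [Nat.cast_sub (Nat.pow_le_pow_right hq ((Finset.mem_range.mp hi).trans_le hk).le)]
  push_cast
  rfl

section FiniteField

variable {K V : Type*} [DivisionRing K] [Fintype K] [AddCommGroup V] [Module K V] [Finite V]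

local notation "q" => Fintype.card K

lemma card_linearIndependent_range_subset (U : Submodule K V) {k : ℕ} (hk : k ≤ finrank K U) :
    Nat.card {s : Fin k → V // LinearIndependent K s ∧ Set.range s ⊆ U} =
      ∏ i : Fin k, (q ^ finrank K U - q ^ i.val) := by
  let e : {s : Fin k → V // LinearIndependent K s ∧ Set.range s ⊆ U} ≃
      {t : Fin k → U // LinearIndependent K t} :=
    { toFun s := ⟨fun i => ⟨s.1 i, s.2.2 (Set.mem_range_self i)⟩,
        LinearIndependent.of_comp U.subtype s.2.1⟩
      invFun t := ⟨fun i => t.1 i, t.2.map' U.subtype U.ker_subtype,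
        by rintro _ ⟨i, rfl⟩; exact (t.1 i).2⟩
      left_inv _ := rfl
      right_inv _ := rfl }
  rw [Nat.card_congr e, card_linearIndependent hk]

lemma card_finrank_eq_mul_prod_eq_prod_mul_card_le (W : Submodule K V) {d : ℕ}
    (hWd : finrank K W ≤ d) :
    Nat.card {U : Submodule K V // finrank K U = d} * ∏ i : Fin (finrank K W), (q ^ d - q ^ i.val) =
      (∏ i : Fin (finrank K W), (q ^ finrank K V - q ^ i.val)) *
        Nat.card {U : Submodule K V // finrank K U = d ∧ W ≤ U} := by
  have : Finite (Submodule K V) := Finite.of_injective _ SetLike.coe_injective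
  set k := finrank K W
  let Flags := {x : Submodule K V × (Fin k → V) //
    finrank K x.1 = d ∧ LinearIndependent K x.2 ∧ Set.range x.2 ⊆ x.1}
  let bySubspace : Flags ≃ Σ U : {U : Submodule K V // finrank K U = d},
      {s : Fin k → V // LinearIndependent K s ∧ Set.range s ⊆ U.1} :=
    { toFun x := ⟨⟨x.1.1, x.2.1⟩, ⟨x.1.2, x.2.2⟩⟩
      invFun y := ⟨(y.1.1, y.2.1), y.1.2, y.2.2⟩
      left_inv _ := rfl
      right_inv _ := rfl }
  let byTuple : Flags ≃ Σ s : {s : Fin k → V // LinearIndependent K s},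
      {U : Submodule K V // finrank K U = d ∧ span K (Set.range s.1) ≤ U} :=
    { toFun x := ⟨⟨x.1.2, x.2.2.1⟩, ⟨x.1.1, x.2.1, span_le.mpr x.2.2.2⟩⟩
      invFun y := ⟨(y.2.1, y.1.1), y.2.2.1, y.1.2, span_le.mp y.2.2.2⟩
      left_inv _ := rfl
      right_inv _ := rfl }
  have hSubspace := Nat.card_congr bySubspace
  rw [Nat.card_sigma_of_card_eq fun U => by
    rw [card_linearIndependent_range_subset U.1 (by rw [U.2]; exact hWd), U.2]] at hSubspace
  have hTuple := Nat.card_congr byTuple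
  rw [Nat.card_sigma_of_card_eq fun s => card_finrank_eq_and_le_congr
    (by rw [finrank_span_eq_card s.2, Fintype.card_fin]) d,
    card_linearIndependent (finrank_le W)] at hTuple
  rw [← hSubspace, hTuple]

lemma card_finrank_eq_and_le_div_card_finrank_eq (W : Submodule K V) {d : ℕ}
    (hd : d ≤ finrank K V) :
    (Nat.card {U : Submodule K V // finrank K U = d ∧ W ≤ U} : ℝ) /
        Nat.card {U : Submodule K V // finrank K U = d} =
      (∏ i ∈ Finset.range (finrank K W), ((q : ℝ) ^ d - q ^ i)) /
        ∏ i ∈ Finset.range (finrank K W), ((q : ℝ) ^ finrank K V - q ^ i) := by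
  rcases le_or_gt (finrank K W) d with hWd | hdW
  · have : Finite (Submodule K V) := Finite.of_injective _ SetLike.coe_injective
    obtain ⟨U, hU⟩ := exists_finrank_eq hd
    have : Nonempty {U : Submodule K V // finrank K U = d} := ⟨⟨U, hU⟩⟩
    have hq : (1 : ℝ) < q := by exact_mod_cast Fintype.one_lt_card
    have hden : ∏ i ∈ Finset.range (finrank K W), ((q : ℝ) ^ finrank K V - q ^ i) ≠ 0 :=
      Finset.prod_ne_zero_iff.mpr fun i hi => sub_ne_zero.mpr (pow_lt_pow_right₀ hq
        ((Finset.mem_range.mp hi).trans_le (finrank_le W))).ne'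
    rw [div_eq_div_iff (Nat.cast_ne_zero.mpr Nat.card_pos.ne') hden, ← Nat.cast_prod_pow_sub_pow Fintype.card_pos hWd,
      ← Nat.cast_prod_pow_sub_pow Fintype.card_pos (finrank_le W)]
    norm_cast
    linarith [card_finrank_eq_mul_prod_eq_prod_mul_card_le W hWd]
  · have : IsEmpty {U : Submodule K V // finrank K U = d ∧ W ≤ U} :=
      ⟨fun ⟨U, hU, hWU⟩ => (finrank_mono hWU).not_gt (hU ▸ hdW)⟩
    rw [Nat.card_of_isEmpty, Nat.cast_zero, zero_div,
      Finset.prod_eq_zero (Finset.mem_range.mpr hdW) (sub_self _), zero_div]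

end FiniteField

section ZModModule

variable {p : ℕ} [Fact p.Prime] {V : Type*} [AddCommGroup V] [Module (ZMod p) V] [Finite V]

lemma AddSubgroup.card_eq_pow_iff_finrank_toZModSubmodule (H : AddSubgroup V) (d : ℕ) :
    Nat.card H = p ^ d ↔ finrank (ZMod p) (AddSubgroup.toZModSubmodule p H) = d := by
  have := Fintype.ofFinite (AddSubgroup.toZModSubmodule p H)
  have hcard : Nat.card H = p ^ finrank (ZMod p) (AddSubgroup.toZModSubmodule p H) :=
    calc Nat.card H = Fintype.card (AddSubgroup.toZModSubmodule p H) :=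
      Nat.card_eq_fintype_card (α := AddSubgroup.toZModSubmodule p H)
      _ = _ := by rw [card_eq_pow_finrank (K := ZMod p), ZMod.card]
  rw [hcard, (Nat.pow_right_injective (Fact.out : p.Prime).two_le).eq_iff]

lemma card_addSubgroup_card_eq_pow (d : ℕ) :
    Nat.card {H : AddSubgroup V // Nat.card H = p ^ d} =
      Nat.card {U : Submodule (ZMod p) V // finrank (ZMod p) U = d} :=
  Nat.card_congr <| (AddSubgroup.toZModSubmodule p).toEquiv.subtypeEquiv fun H =>
    H.card_eq_pow_iff_finrank_toZModSubmodule d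

lemma card_addSubgroup_card_eq_pow_and_closure_le (s : Set V) (d : ℕ) :
    Nat.card {H : AddSubgroup V // Nat.card H = p ^ d ∧ AddSubgroup.closure s ≤ H} =
      Nat.card {U : Submodule (ZMod p) V // finrank (ZMod p) U = d ∧ span (ZMod p) s ≤ U} :=
  Nat.card_congr <| (AddSubgroup.toZModSubmodule p).toEquiv.subtypeEquiv fun H =>
    and_congr (H.card_eq_pow_iff_finrank_toZModSubmodule d)
      (by rw [AddSubgroup.closure_le, span_le]; rfl)

end ZModModule

open Polynomial in
/-- Let `p` be a prime, `n ≥ 0`, `v ≥ 1`, and `a₁ = 0, a₂, …, a_v ∈ ℤ_p^n = (ZMod p)^n`,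
and let `K'` be the subgroup generated by `a₁, …, a_v`.  Then there is a real polynomial
`R` of degree at most `v − 1` such that for every `0 ≤ d ≤ n`, the fraction of subgroups
of `ℤ_p^n` of order `p^d` that contain `K'` equals `R(p^d)`. -/
theorem fraction_subgroups_containing_closure (p n v : ℕ) (hp : p.Prime) (hv : 0 < v)
    (a : Fin v → (Fin n → ZMod p)) (ha : a ⟨0, hv⟩ = 0) :
    ∃ R : Polynomial ℝ, R.natDegree ≤ v - 1 ∧
      ∀ d : ℕ, d ≤ n →
        (Nat.card {K : AddSubgroup (Fin n → ZMod p) //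
            Nat.card K = p ^ d ∧ AddSubgroup.closure (Set.range a) ≤ K} : ℝ) /
          (Nat.card {K : AddSubgroup (Fin n → ZMod p) // Nat.card K = p ^ d} : ℝ) =
        R.eval ((p : ℝ) ^ d) := by
  have : Fact p.Prime := ⟨hp⟩
  obtain ⟨v, rfl⟩ : ∃ m, v = m + 1 := ⟨v - 1, by omega⟩
  set k := finrank (ZMod p) (span (ZMod p) (Set.range a))
  refine ⟨C (∏ i ∈ Finset.range k, ((p : ℝ) ^ n - p ^ i))⁻¹ *
    ∏ i ∈ Finset.range k, (X - C ((p : ℝ) ^ i)), ?_, fun d hd => ?_⟩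
  · calc _ ≤ (∏ i ∈ Finset.range k, (X - C ((p : ℝ) ^ i))).natDegree := natDegree_C_mul_le _ _
      _ = k := by rw [natDegree_finsetProd_X_sub_C_eq_card, Finset.card_range]
      _ ≤ v := finrank_span_range_le_of_eq_zero a ha
      _ = v + 1 - 1 := rfl
  · rw [card_addSubgroup_card_eq_pow_and_closure_le, card_addSubgroup_card_eq_pow,
      card_finrank_eq_and_le_div_card_finrank_eq _ (by rwa [finrank_fin_fun]), ZMod.card,
      finrank_fin_fun]
    simp [k, eval_prod, div_eq_inv_mul]
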